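/- Let f : X̄ → X̄ with X̄ = X ∪ {∂}, X finite, and for each k let f^k : X̄ → X̄ and (X_i^k)_{i∈I_k} a finite family of pairwise disjoint subsets of X. Set G_k = {(f^k)→_{X_i^k} : i ∈ I_k} and Φ_k = R ∘ (G_k)⋆. Then for any probability measure b₀ supported in X and any k ∈ ℕ, |Φ_{0:k}(b₀) \ {δ_∂}| ≤ |supp(b₀)|. -/

import Mathlib

open scoped Classical

/-- Forward mapping `f→_S : X̄ → X̄` associated with a self-mapping `f` of
`X̄ = X ∪ {∂}` (with `∂` encoded by `none`) and a subset `S ⊆ X`: it sends `x ∈ X` to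
`f(x)` when `f(x) ∈ S`, and to `∂` otherwise, and `∂` to `∂`. -/
noncomputable def forwardBar {X : Type*} (f : Option X → Option X) (S : Finset X) :
    Option X → Option X
  | none => none
  | some x =>
    match f (some x) with
    | some y => if y ∈ S then some y else none
    | none => none

/-- Pushforward of a finitely supported measure on `X̄` by a self-mapping of `X̄`. -/
noncomputable def push {X : Type*} [Fintype X] (g : Option X → Option X)
    (ν : Option X → NNReal) : Option X → NNReal :=
  fun o => ∑ o' ∈ Finset.univ.filter (fun o' => g o' = o), ν o'

/-- Renormalization: the normalized restriction of `ν` to `X` when `ν(X) ≠ 0`,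
and the Dirac measure at `∂` otherwise. -/
noncomputable def renorm {X : Type*} [Fintype X] (ν : Option X → NNReal) :
    Option X → NNReal :=
  if (∑ x : X, ν (some x)) = 0 then (fun o => if o = none then 1 else 0)
  else fun o =>
    match o with
    | none => 0
    | some x => ν (some x) / ∑ x : X, ν (some x)

/-- The Dirac measure at the cemetery point `∂` (encoded by `none`). -/
noncomputable def diracCemetery (X : Type*) : Option X → NNReal :=
  fun o => if o = none then 1 else 0

/-- Cardinality of the support of the restriction to `X` of a measure on `X̄`. -/
noncomputable def suppCard {X : Type*} [Fintype X] (b : Option X → NNReal) : ℕ :=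
  (Finset.univ.filter (fun x : X => b (some x) ≠ 0)).card

/-- The set `Φ_{0:k}(b₀) = {φ_k ∘ ⋯ ∘ φ₀ (b₀) : φ_i ∈ Φ_i}`. -/
def iterSet {X : Type*}
    (Φ : ℕ → Set ((Option X → NNReal) → (Option X → NNReal)))
    (b₀ : Option X → NNReal) : ℕ → Set (Option X → NNReal)
  | 0 => {m | ∃ φ ∈ Φ 0, m = φ b₀}
  | k + 1 => {m | ∃ φ ∈ Φ (k + 1), ∃ m' ∈ iterSet Φ b₀ k, m = φ m'}

/-!
Each map `R ∘ (f^k)→_{X_i^k}⋆` sends a measure `ν` to one supported in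
`f^k(supp ν) ∩ X_i^k`, and renormalization never enlarges a support. As the `X_i^k` are
disjoint, the support sizes of the images of `ν` under all of `Φ_k` add up to at most
`|supp ν|`. Hence the total support size `∑ |supp m|` over `Φ_{0:k}(b₀)` never exceeds
`|supp b₀|`, while every member other than `δ_∂` has nonempty support.
-/

theorem forwardBar_eq_some_iff {X : Type*} {g : Option X → Option X} {S : Finset X}
    {o : Option X} {x : X} :
    forwardBar g S o = some x ↔ ∃ z, o = some z ∧ g (some z) = some x ∧ x ∈ S := by
  rcases o with _ | z
  · simp [forwardBar]
  · simp only [forwardBar, Option.some.injEq, exists_eq_left']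
    rcases g (some z) with _ | y
    · simp
    · by_cases hy : y ∈ S <;> simp only [hy, if_true, if_false, Option.some.injEq] <;> grind

section Measures

variable {X : Type*} [Fintype X]

theorem suppCard_diracCemetery : suppCard (diracCemetery X) = 0 := by
  simp [suppCard, diracCemetery]

theorem renorm_eq_diracCemetery {ν : Option X → NNReal} (h : ∑ x : X, ν (some x) = 0) :
    renorm ν = diracCemetery X := by
  funext o
  simp [renorm, h, diracCemetery]

theorem suppCard_renorm {ν : Option X → NNReal} (h : ∑ x : X, ν (some x) ≠ 0) :
    suppCard (renorm ν) = suppCard ν := by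
  simp [suppCard, renorm, h]

theorem suppCard_renorm_le (ν : Option X → NNReal) : suppCard (renorm ν) ≤ suppCard ν := by
  by_cases h : ∑ x : X, ν (some x) = 0
  · simp [renorm_eq_diracCemetery h, suppCard_diracCemetery]
  · exact (suppCard_renorm h).le

theorem suppCard_renorm_pos {ν : Option X → NNReal} (h : renorm ν ≠ diracCemetery X) :
    0 < suppCard (renorm ν) := by
  have hsum : ∑ x : X, ν (some x) ≠ 0 := fun h0 => h (renorm_eq_diracCemetery h0)
  obtain ⟨x, -, hx⟩ := Finset.exists_ne_zero_of_sum_ne_zero hsum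
  rw [suppCard_renorm hsum]
  exact Finset.card_pos.2 ⟨x, by simp [hx]⟩

theorem exists_of_push_forwardBar_some_ne_zero {g : Option X → Option X} {S : Finset X}
    {ν : Option X → NNReal} {x : X} (h : push (forwardBar g S) ν (some x) ≠ 0) :
    x ∈ S ∧ ∃ z, ν (some z) ≠ 0 ∧ g (some z) = some x := by
  obtain ⟨o, ho, hνo⟩ := Finset.exists_ne_zero_of_sum_ne_zero h
  obtain ⟨z, rfl, hgz, hxS⟩ := forwardBar_eq_some_iff.1 (Finset.mem_filter.1 ho).2
  exact ⟨hxS, z, hνo, hgz⟩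

-- The supports of the pieces are disjoint subsets of the image of `supp ν` under `g`.
theorem sum_suppCard_renorm_push_forwardBar_le {ι : Type*} (g : Option X → Option X)
    {I : Finset ι} {S : ι → Finset X} (hS : (I : Set ι).PairwiseDisjoint S)
    (ν : Option X → NNReal) :
    ∑ i ∈ I, suppCard (renorm (push (forwardBar g (S i)) ν)) ≤ suppCard ν := by
  let supp : (Option X → NNReal) → Finset X := fun μ => {x | μ (some x) ≠ 0}
  let image : Finset X := {x | some x ∈ (supp ν).image (g ∘ some)}
  have hsupp : ∀ i, supp (push (forwardBar g (S i)) ν) ⊆ S i ∩ image := by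
    intro i x hx
    obtain ⟨hxS, z, hz, hgz⟩ :=
      exists_of_push_forwardBar_some_ne_zero (Finset.mem_filter.1 hx).2
    simpa [image, supp, hxS] using ⟨z, hz, hgz⟩
  calc ∑ i ∈ I, suppCard (renorm (push (forwardBar g (S i)) ν))
      ≤ ∑ i ∈ I, (supp (push (forwardBar g (S i)) ν)).card :=
        Finset.sum_le_sum fun i _ => suppCard_renorm_le _
    _ = (I.biUnion fun i => supp (push (forwardBar g (S i)) ν)).card :=
        (Finset.card_biUnion
          (hS.mono_on fun i _ => (hsupp i).trans Finset.inter_subset_left)).symm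
    _ ≤ image.card :=
        Finset.card_le_card (Finset.biUnion_subset.2 fun i _ =>
          (hsupp i).trans Finset.inter_subset_right)
    _ ≤ ((supp ν).image (g ∘ some)).card :=
        Finset.card_le_card_of_injOn some (fun x hx => (Finset.mem_filter.1 hx).2)
          (Option.some_injective X).injOn
    _ ≤ suppCard ν := Finset.card_image_le

end Measures

section Iteration

variable {X : Type*} {Φ : ℕ → Set ((Option X → NNReal) → Option X → NNReal)}
  {b₀ : Option X → NNReal}

theorem iterSet_zero : iterSet Φ b₀ 0 = Set.image2 (· ·) (Φ 0) {b₀} := by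
  ext m
  simp [iterSet, eq_comm]

theorem iterSet_succ (k : ℕ) :
    iterSet Φ b₀ (k + 1) = Set.image2 (· ·) (Φ (k + 1)) (iterSet Φ b₀ k) := by
  ext m
  simp [iterSet, eq_comm]

theorem exists_iterSet_eq_image2 (k : ℕ) : ∃ A, iterSet Φ b₀ k = Set.image2 (· ·) (Φ k) A := by
  cases k with
  | zero => exact ⟨_, iterSet_zero⟩
  | succ k => exact ⟨_, iterSet_succ k⟩

theorem exists_finset_iterSet_eq_sum_le (w : (Option X → NNReal) → ℕ)
    (Ψ : ℕ → Finset ((Option X → NNReal) → Option X → NNReal)) (hΦ : ∀ n, Φ n = Ψ n)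
    (hw : ∀ n ν, ∑ φ ∈ Ψ n, w (φ ν) ≤ w ν) (k : ℕ) :
    ∃ F : Finset (Option X → NNReal), iterSet Φ b₀ k = F ∧ ∑ m ∈ F, w m ≤ w b₀ := by
  have step : ∀ n (F : Finset (Option X → NNReal)), Set.image2 (· ·) (Φ n) F =
      ↑(Finset.image₂ (· ·) (Ψ n) F) ∧
      ∑ m ∈ Finset.image₂ (· ·) (Ψ n) F, w m ≤ ∑ m ∈ F, w m := by
    intro n F
    refine ⟨by rw [hΦ, Finset.coe_image₂], ?_⟩
    calc ∑ m ∈ Finset.image₂ (· ·) (Ψ n) F, w m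
        ≤ ∑ p ∈ Ψ n ×ˢ F, w (p.1 p.2) :=
          Finset.sum_image_le_of_nonneg fun _ _ => Nat.zero_le _
      _ = ∑ m ∈ F, ∑ φ ∈ Ψ n, w (φ m) := Finset.sum_product_right _ _ _
      _ ≤ ∑ m ∈ F, w m := Finset.sum_le_sum fun m _ => hw n m
  induction k with
  | zero =>
    obtain ⟨hF, hsum⟩ := step 0 {b₀}
    exact ⟨_, by rw [iterSet_zero, ← hF, Finset.coe_singleton], by simpa using hsum⟩
  | succ k ih =>
    obtain ⟨F, hF, hFsum⟩ := ih
    obtain ⟨hG, hGsum⟩ := step (k + 1) F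
    exact ⟨_, by rw [iterSet_succ, hF, hG], hGsum.trans hFsum⟩

theorem ncard_iterSet_diff_le (w : (Option X → NNReal) → ℕ) (d : Option X → NNReal)
    (Ψ : ℕ → Finset ((Option X → NNReal) → Option X → NNReal)) (hΦ : ∀ n, Φ n = Ψ n)
    (hw : ∀ n ν, ∑ φ ∈ Ψ n, w (φ ν) ≤ w ν)
    (hpos : ∀ n, ∀ φ ∈ Ψ n, ∀ ν, φ ν ≠ d → 0 < w (φ ν)) (k : ℕ) :
    (iterSet Φ b₀ k \ {d}).ncard ≤ w b₀ := by
  obtain ⟨F, hF, hFsum⟩ := exists_finset_iterSet_eq_sum_le w Ψ hΦ hw k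
  obtain ⟨A, hA⟩ := exists_iterSet_eq_image2 (Φ := Φ) (b₀ := b₀) k
  have hF_pos : ∀ m ∈ F.erase d, 1 ≤ w m := by
    intro m hm
    obtain ⟨hmd, hmF⟩ := Finset.mem_erase.1 hm
    rw [← Finset.mem_coe, ← hF, hA, hΦ] at hmF
    obtain ⟨φ, hφ, ν, -, rfl⟩ := hmF
    exact hpos k φ hφ ν hmd
  rw [hF, ← Finset.coe_singleton, ← Finset.coe_sdiff, Set.ncard_coe_finset,
    ← Finset.erase_eq]
  calc (F.erase d).card ≤ ∑ m ∈ F.erase d, w m := by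
        simpa using Finset.card_nsmul_le_sum _ _ 1 hF_pos
    _ ≤ ∑ m ∈ F, w m := Finset.sum_le_sum_of_subset (Finset.erase_subset d F)
    _ ≤ w b₀ := hFsum

end Iteration

theorem card_iterSet_forward_le_suppCard_general {X ι : Type*} [Fintype X]
    (f : ℕ → Option X → Option X)
    (I : ℕ → Finset ι) (Xi : ℕ → ι → Finset X)
    (hdis : ∀ k : ℕ, ∀ i ∈ I k, ∀ j ∈ I k, i ≠ j → Disjoint (Xi k i) (Xi k j))
    (Φ : ℕ → Set ((Option X → NNReal) → (Option X → NNReal)))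
    (hΦ : ∀ k : ℕ,
      Φ k = {ψ | ∃ i ∈ I k, ψ = fun ν => renorm (push (forwardBar (f k) (Xi k i)) ν)})
    (b₀ : Option X → NNReal) (k : ℕ) :
    (iterSet Φ b₀ k \ {diracCemetery X}).ncard ≤ suppCard b₀ := by
  let T : ℕ → ι → (Option X → NNReal) → Option X → NNReal :=
    fun n i ν => renorm (push (forwardBar (f n) (Xi n i)) ν)
  refine ncard_iterSet_diff_le suppCard _ (fun n => (I n).image (T n)) ?_ ?_ ?_ k
  · intro n
    ext ψ
    simp [hΦ, T, eq_comm]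
  · intro n ν
    exact (Finset.sum_image_le_of_nonneg fun _ _ => Nat.zero_le _).trans
      (sum_suppCard_renorm_push_forwardBar_le (f n) (hdis n) ν)
  · simp only [Finset.mem_image, forall_exists_index, and_imp]
    rintro n - i - rfl ν hν
    exact suppCard_renorm_pos hν

/-- For each `k`, let `f^k : X̄ → X̄` and `(X_i^k)_{i ∈ I_k}` a finite family of
pairwise disjoint subsets of `X`; set `G_k = {(f^k)→_{X_i^k} : i ∈ I_k}` and
`Φ_k = R ∘ (G_k)⋆`. Then for any probability measure `b₀` supported on `X` and any
`k ∈ ℕ`, `|Φ_{0:k}(b₀) \ {δ_∂}| ≤ |supp(b₀)|`. -/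
theorem card_iterSet_forward_le_suppCard {X ι : Type*} [Fintype X]
    (f : ℕ → Option X → Option X)
    (I : ℕ → Finset ι) (Xi : ℕ → ι → Finset X)
    (hdis : ∀ k : ℕ, ∀ i ∈ I k, ∀ j ∈ I k, i ≠ j → Disjoint (Xi k i) (Xi k j))
    (Φ : ℕ → Set ((Option X → NNReal) → (Option X → NNReal)))
    (hΦ : ∀ k : ℕ,
      Φ k = {ψ | ∃ i ∈ I k, ψ = fun ν => renorm (push (forwardBar (f k) (Xi k i)) ν)})
    (b₀ : Option X → NNReal) (hb₀ : ∑ o : Option X, b₀ o = 1)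
    (hb₀X : b₀ none = 0) (k : ℕ) :
    (iterSet Φ b₀ k \ {diracCemetery X}).ncard ≤ suppCard b₀ :=
  card_iterSet_forward_le_suppCard_general f I Xi hdis Φ hΦ b₀ k
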